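/- The partition function of H_S in the degenerate DA model equals Tr e^{−βH_S} = e^{−βe₁} + e^{−βe₂} + (N_D−1)e^{−βE_D} + (N_A−1)e^{−βE_A}, where e₁,e₂ are the eigenvalues of [[E_D,v],[v,E_A]] with v = V√(N_D N_A). -/

import Mathlib

/-!
The matrix `-β H` has the form "a scalar on the diagonal of each block plus a constant on each
block", and such matrices form an algebra. It acts on the span of the two block indicator vectors
through a 2×2 matrix with eigenvalues `-β e₁, -β e₂`, and on the zero-sum vectors of the two blocks
(of dimensions `N_D - 1` and `N_A - 1`) as the scalars `-β E_D` and `-β E_A`. Hence the power sums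
`tr((-β H)^k)` are `(-β e₁)^k + (-β e₂)^k + (N_D - 1) (-β E_D)^k + (N_A - 1) (-β E_A)^k`, by
Cayley–Hamilton for the 2×2 part, and summing the exponential series gives the trace of the
exponential.
-/

open Matrix
open scoped Nat

namespace Matrix

theorem hasSum_trace_pow_div_factorial {ι : Type*} [Fintype ι] [DecidableEq ι]
    (A : Matrix ι ι ℂ) :
    HasSum (fun k : ℕ => (k ! : ℂ)⁻¹ * trace (A ^ k)) (trace (NormedSpace.exp A)) := by
  -- `NormedSpace.exp` does not depend on a norm; any algebra norm makes its series converge.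
  let _ : NormedRing (Matrix ι ι ℂ) := Matrix.linftyOpNormedRing
  let _ : NormedAlgebra ℂ (Matrix ι ι ℂ) := Matrix.linftyOpNormedAlgebra
  have h := (NormedSpace.exp_series_hasSum_exp' (𝕂 := ℂ) A).mapL
    (traceLinearMap ι ℂ ℂ).toContinuousLinearMap
  simp only [LinearMap.coe_toContinuousLinearMap', traceLinearMap_apply, trace_smul,
    smul_eq_mul] at h
  exact h

theorem trace_exp_eq_of_trace_pow_eq {ι κ : Type*} [Fintype ι] [DecidableEq ι] [Fintype κ]
    (A : Matrix ι ι ℂ) (c μ : κ → ℂ) (h : ∀ k : ℕ, trace (A ^ k) = ∑ i, c i * μ i ^ k) :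
    trace (NormedSpace.exp A) = ∑ i, c i * Complex.exp (μ i) := by
  refine (hasSum_trace_pow_div_factorial A).unique ?_
  simp_rw [h, Finset.mul_sum, mul_left_comm _ (c _)]
  refine hasSum_sum fun i _ => HasSum.mul_left (c i) ?_
  simpa only [Complex.exp_eq_exp_ℂ, smul_eq_mul] using
    NormedSpace.exp_series_hasSum_exp' (𝕂 := ℂ) (μ i)

theorem sq_fin_two {R : Type*} [CommRing R] (M : Matrix (Fin 2) (Fin 2) R) :
    M ^ 2 = M.trace • M - M.det • 1 := by
  ext i j
  fin_cases i <;> fin_cases j <;>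
    simp [sq, mul_apply, Fin.sum_univ_two, trace_fin_two, det_fin_two] <;> ring

theorem trace_pow_fin_two {R : Type*} [CommRing R] (M : Matrix (Fin 2) (Fin 2) R) (x y : R)
    (hsum : x + y = M.trace) (hprod : x * y = M.det) (k : ℕ) :
    trace (M ^ k) = x ^ k + y ^ k := by
  induction k using Nat.twoStepInduction with
  | zero => simp only [pow_zero, trace_one, Fintype.card_fin, Nat.cast_ofNat, one_add_one_eq_two]
  | one => simp only [pow_one, hsum]
  | more k ih₀ ih₁ =>
    have hrec : M ^ (k + 2) = M.trace • M ^ (k + 1) - M.det • M ^ k := by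
      rw [pow_add, sq_fin_two, Matrix.mul_sub, Matrix.mul_smul, Matrix.mul_smul, Matrix.mul_one,
        ← pow_succ]
    rw [hrec, trace_sub, trace_smul, trace_smul, ih₀, ih₁, ← hsum, ← hprod, smul_eq_mul,
      smul_eq_mul]
    ring

end Matrix

section BlockConst

variable {R : Type*} [CommRing R] (m n : ℕ)

def blockConstMatrix (a b c d e f : R) : Matrix (Fin m ⊕ Fin n) (Fin m ⊕ Fin n) R :=
  fun x y => match x, y with
  | .inl j, .inl j' => (if j = j' then a else 0) + c
  | .inl _, .inr _ => d
  | .inr _, .inl _ => e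
  | .inr k, .inr k' => (if k = k' then b else 0) + f

/-- The action of `blockConstMatrix m n a b c d e f` on the span of the indicator vectors of the
two blocks, in the basis formed by these vectors. -/
def blockConstCollapse (a b c d e f : R) : Matrix (Fin 2) (Fin 2) R :=
  !![a + m * c, n * d; m * e, b + n * f]

theorem blockConstMatrix_one : blockConstMatrix m n (1 : R) 1 0 0 0 0 = 1 := by
  ext (x | x) (y | y) <;> simp [blockConstMatrix, one_apply]

theorem blockConstMatrix_mul (a b c d e f a' b' c' d' e' f' : R) :
    blockConstMatrix m n a b c d e f * blockConstMatrix m n a' b' c' d' e' f' =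
      blockConstMatrix m n (a * a') (b * b')
        (a * c' + c * a' + m * c * c' + n * d * e') (a * d' + d * b' + m * c * d' + n * d * f')
        (b * e' + e * a' + n * f * e' + m * e * c') (b * f' + f * b' + n * f * f' + m * e * d') := by
  ext (x | x) (y | y) <;>
    simp [blockConstMatrix, mul_apply, Fintype.sum_sum_type, add_mul, mul_add,
      Finset.sum_add_distrib, ite_mul, mul_ite] <;> ring

theorem blockConstCollapse_mul (a b c d e f a' b' c' d' e' f' : R) :
    blockConstCollapse m n a b c d e f * blockConstCollapse m n a' b' c' d' e' f' =
      blockConstCollapse m n (a * a') (b * b')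
        (a * c' + c * a' + m * c * c' + n * d * e') (a * d' + d * b' + m * c * d' + n * d * f')
        (b * e' + e * a' + n * f * e' + m * e * c') (b * f' + f * b' + n * f * f' + m * e * d') := by
  ext i j
  fin_cases i <;> fin_cases j <;> simp [blockConstCollapse] <;> ring

theorem trace_blockConstMatrix (a b c d e f : R) :
    trace (blockConstMatrix m n a b c d e f) =
      (m - 1) * a + (n - 1) * b + trace (blockConstCollapse m n a b c d e f) := by
  simp [trace, blockConstMatrix, blockConstCollapse, Fintype.sum_sum_type]
  ring

theorem exists_blockConstMatrix_pow (a b c d e f : R) (k : ℕ) :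
    ∃ c' d' e' f' : R,
      blockConstMatrix m n a b c d e f ^ k = blockConstMatrix m n (a ^ k) (b ^ k) c' d' e' f' ∧
      blockConstCollapse m n a b c d e f ^ k =
        blockConstCollapse m n (a ^ k) (b ^ k) c' d' e' f' := by
  induction k with
  | zero =>
    refine ⟨0, 0, 0, 0, by simp only [pow_zero, blockConstMatrix_one], ?_⟩
    simp [blockConstCollapse, one_fin_two]
  | succ k ih =>
    obtain ⟨c', d', e', f', hpow, hcollapse⟩ := ih
    exact ⟨_, _, _, _, by rw [pow_succ, hpow, blockConstMatrix_mul, ← pow_succ, ← pow_succ],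
      by rw [pow_succ, hcollapse, blockConstCollapse_mul, ← pow_succ, ← pow_succ]⟩

theorem trace_blockConstMatrix_pow (a b c d e f : R) (k : ℕ) :
    trace (blockConstMatrix m n a b c d e f ^ k) =
      (m - 1) * a ^ k + (n - 1) * b ^ k +
        trace (blockConstCollapse m n a b c d e f ^ k) := by
  obtain ⟨c', d', e', f', hpow, hcollapse⟩ := exists_blockConstMatrix_pow m n a b c d e f k
  rw [hpow, hcollapse, trace_blockConstMatrix]

end BlockConst

theorem stmt10 (N_D N_A : ℕ)
    (E_D E_A V β : ℝ)
    (H : Matrix (Fin N_D ⊕ Fin N_A) (Fin N_D ⊕ Fin N_A) ℂ)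
    (hH : ∀ a b, H a b =
      match a, b with
      | Sum.inl j, Sum.inl j' => if j = j' then (E_D : ℂ) else 0
      | Sum.inr k, Sum.inr k' => if k = k' then (E_A : ℂ) else 0
      | _, _ => (V : ℂ))
    (v e₁ e₂ : ℝ) (hv : v = V * Real.sqrt ((N_D : ℝ) * N_A))
    (he₁ : e₁ = (E_D + E_A + Real.sqrt ((E_D - E_A) ^ 2 + 4 * v ^ 2)) / 2)
    (he₂ : e₂ = (E_D + E_A - Real.sqrt ((E_D - E_A) ^ 2 + 4 * v ^ 2)) / 2) :
    Matrix.trace (NormedSpace.exp ((-β : ℂ) • H)) =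
      ((Real.exp (-β * e₁) + Real.exp (-β * e₂)
        + ((N_D : ℝ) - 1) * Real.exp (-β * E_D)
        + ((N_A : ℝ) - 1) * Real.exp (-β * E_A) : ℝ) : ℂ) := by
  have hv_sq : v ^ 2 = N_D * N_A * V ^ 2 := by
    rw [hv, mul_pow, Real.sq_sqrt (by positivity)]
    ring
  have hsum : (e₁ + e₂ : ℂ) = E_D + E_A := by
    exact_mod_cast (by rw [he₁, he₂]; ring : e₁ + e₂ = E_D + E_A)
  have hprod : (e₁ * e₂ : ℂ) = E_D * E_A - N_D * N_A * V ^ 2 := by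
    have hdisc := Real.sq_sqrt (by positivity : 0 ≤ (E_D - E_A) ^ 2 + 4 * v ^ 2)
    exact_mod_cast (by rw [he₁, he₂]; linear_combination (-1 / 4 : ℝ) * hdisc - hv_sq :
      e₁ * e₂ = E_D * E_A - N_D * N_A * V ^ 2)
  have hblock : (-β : ℂ) • H =
      blockConstMatrix N_D N_A (-β * E_D : ℂ) (-β * E_A) 0 (-β * V) (-β * V) 0 := by
    ext (x | x) (y | y) <;> simp [hH, blockConstMatrix, mul_ite]
  have hpow (k : ℕ) : trace (((-β : ℂ) • H) ^ k) =
      ∑ i, ![1, 1, (N_D : ℂ) - 1, (N_A : ℂ) - 1] i *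
        ![-β * e₁, -β * e₂, -β * E_D, -β * E_A] i ^ k := by
    rw [hblock, trace_blockConstMatrix_pow, trace_pow_fin_two _ (-β * e₁ : ℂ) (-β * e₂)]
    · simp [Fin.sum_univ_four]
      ring
    · simp [blockConstCollapse, trace_fin_two]
      linear_combination (-β : ℂ) * hsum
    · simp [blockConstCollapse, det_fin_two]
      linear_combination (β : ℂ) ^ 2 * hprod
  rw [trace_exp_eq_of_trace_pow_eq _ _ _ hpow]
  simp [Fin.sum_univ_four]
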